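/- arXiv:1608.05217 — 5 statements merged into one kernel-verified Lean document; each statement's English description precedes it below -/
import Mathlib

section
/- For all x ≥ 0, it holds that 1/(√(2π)(1+x)) ≤ (1 - Φ(x))·exp(x²/2) ≤ 1/(√π(1+x)), where Φ is the standard normal distribution function. -/
open MeasureTheory Real

noncomputable def stdNormalCDF (x : ℝ) : ℝ :=
  ∫ t in Set.Iic x, Real.exp (-t ^ 2 / 2) / Real.sqrt (2 * Real.pi)

/-!
Let `T x = ∫_x^∞ e^{-t²/2} dt`, so that `1 - Φ x = T x / √(2π)`. The derivative of
`-e^{-t²/2} / (1 + t)` is `e^{-t²/2} w t` with `w t = (t² + t + 1) / (1 + t)²`, hence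
`e^{-x²/2} / (1 + x) = ∫_x^∞ e^{-t²/2} w t dt`. As `3/4 ≤ w ≤ 1` on `[0, ∞)`, this gives
`1 / (1 + x) ≤ T x e^{x²/2} ≤ (4/3) / (1 + x)`, and `4/3 ≤ √2`.
-/

open Filter Set Topology

noncomputable def gaussianTail (x : ℝ) : ℝ := ∫ t in Ioi x, exp (-t ^ 2 / 2)

lemma integrable_exp_neg_sq_div_two : Integrable fun t : ℝ => exp (-t ^ 2 / 2) := by
  simpa [neg_div, div_eq_inv_mul] using integrable_exp_neg_mul_sq (b := 1 / 2) (by norm_num)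

lemma integral_exp_neg_sq_div_two : ∫ t, exp (-t ^ 2 / 2) = √(2 * π) := by
  simpa [neg_div, div_eq_inv_mul] using integral_gaussian (1 / 2)

lemma one_sub_stdNormalCDF (x : ℝ) : 1 - stdNormalCDF x = gaussianTail x / √(2 * π) := by
  have hπ : √(2 * π) ≠ 0 := by positivity
  rw [stdNormalCDF, integral_div, gaussianTail, eq_div_iff hπ, sub_mul, div_mul_cancel₀ _ hπ,
    one_mul, ← integral_exp_neg_sq_div_two,
    ← intervalIntegral.integral_Iic_add_Ioi integrable_exp_neg_sq_div_two.integrableOn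
      integrable_exp_neg_sq_div_two.integrableOn, add_sub_cancel_left]

lemma hasDerivAt_neg_exp_neg_sq_div_two_div_one_add {x : ℝ} (hx : 1 + x ≠ 0) :
    HasDerivAt (fun t => -(exp (-t ^ 2 / 2) / (1 + t)))
      (exp (-x ^ 2 / 2) * ((x ^ 2 + x + 1) / (1 + x) ^ 2)) x := by
  have hq : HasDerivAt (fun t : ℝ => -t ^ 2 / 2) (-x) x :=
    ((hasDerivAt_pow 2 x).neg.div_const 2).congr_deriv (by ring)
  exact (hq.exp.div ((hasDerivAt_id x).const_add 1) hx).neg.congr_deriv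
    (by simp only [id]; field_simp; ring)

lemma tendsto_exp_neg_sq_div_two_div_one_add :
    Tendsto (fun t => exp (-t ^ 2 / 2) / (1 + t)) atTop (𝓝 0) := by
  have hq : Tendsto (fun t : ℝ => -t ^ 2 / 2) atTop atBot :=
    (tendsto_neg_atTop_atBot.comp (tendsto_pow_atTop two_ne_zero)).atBot_div_const two_pos
  exact (tendsto_exp_atBot.comp hq).div_atTop (tendsto_atTop_add_const_left _ 1 tendsto_id)

lemma sq_add_self_add_one_div_one_add_sq_mem_Icc {t : ℝ} (ht : 0 ≤ t) :
    (t ^ 2 + t + 1) / (1 + t) ^ 2 ∈ Icc (3 / 4) 1 := by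
  have h : 0 < (1 + t) ^ 2 := by positivity
  constructor
  · rw [le_div_iff₀ h]; nlinarith [sq_nonneg (t - 1)]
  · rw [div_le_one h]; nlinarith

lemma integrableOn_exp_neg_sq_div_two_mul {x : ℝ} (hx : 0 ≤ x) :
    IntegrableOn (fun t => exp (-t ^ 2 / 2) * ((t ^ 2 + t + 1) / (1 + t) ^ 2)) (Ioi x) := by
  refine integrable_exp_neg_sq_div_two.integrableOn.mono' (by fun_prop) ?_
  filter_upwards [ae_restrict_mem measurableSet_Ioi] with t (ht : x < t)
  have hw := sq_add_self_add_one_div_one_add_sq_mem_Icc (hx.trans ht.le)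
  rw [norm_mul, norm_of_nonneg (exp_pos _).le, norm_of_nonneg (by linarith [hw.1])]
  exact mul_le_of_le_one_right (exp_pos _).le hw.2

lemma integral_Ioi_exp_neg_sq_div_two_mul {x : ℝ} (hx : 0 ≤ x) :
    ∫ t in Ioi x, exp (-t ^ 2 / 2) * ((t ^ 2 + t + 1) / (1 + t) ^ 2) =
      exp (-x ^ 2 / 2) / (1 + x) := by
  rw [integral_Ioi_of_hasDerivAt_of_tendsto'
    (fun t ht => hasDerivAt_neg_exp_neg_sq_div_two_div_one_add (by linarith [mem_Ici.1 ht]))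
    (integrableOn_exp_neg_sq_div_two_mul hx) tendsto_exp_neg_sq_div_two_div_one_add.neg]
  ring

lemma exp_neg_sq_div_two_div_one_add_le_gaussianTail {x : ℝ} (hx : 0 ≤ x) :
    exp (-x ^ 2 / 2) / (1 + x) ≤ gaussianTail x := by
  rw [← integral_Ioi_exp_neg_sq_div_two_mul hx]
  refine setIntegral_mono_on (integrableOn_exp_neg_sq_div_two_mul hx)
    integrable_exp_neg_sq_div_two.integrableOn measurableSet_Ioi fun t (ht : x < t) => ?_
  exact mul_le_of_le_one_right (exp_pos _).le
    (sq_add_self_add_one_div_one_add_sq_mem_Icc (hx.trans ht.le)).2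

lemma three_div_four_mul_gaussianTail_le {x : ℝ} (hx : 0 ≤ x) :
    3 / 4 * gaussianTail x ≤ exp (-x ^ 2 / 2) / (1 + x) := by
  rw [← integral_Ioi_exp_neg_sq_div_two_mul hx, gaussianTail, ← integral_const_mul]
  refine setIntegral_mono_on (integrable_exp_neg_sq_div_two.integrableOn.const_mul _)
    (integrableOn_exp_neg_sq_div_two_mul hx) measurableSet_Ioi fun t (ht : x < t) => ?_
  rw [mul_comm]
  exact mul_le_mul_of_nonneg_left
    (sq_add_self_add_one_div_one_add_sq_mem_Icc (hx.trans ht.le)).1 (exp_pos _).le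

lemma exp_neg_sq_div_two_mul_exp_sq_div_two (x : ℝ) : exp (-x ^ 2 / 2) * exp (x ^ 2 / 2) = 1 := by
  rw [← exp_add, neg_div, neg_add_cancel, exp_zero]

lemma one_div_one_add_le_gaussianTail_mul_exp {x : ℝ} (hx : 0 ≤ x) :
    1 / (1 + x) ≤ gaussianTail x * exp (x ^ 2 / 2) :=
  calc 1 / (1 + x) = exp (-x ^ 2 / 2) / (1 + x) * exp (x ^ 2 / 2) := by
        rw [div_mul_eq_mul_div, exp_neg_sq_div_two_mul_exp_sq_div_two]
    _ ≤ gaussianTail x * exp (x ^ 2 / 2) := by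
        gcongr; exact exp_neg_sq_div_two_div_one_add_le_gaussianTail hx

lemma gaussianTail_mul_exp_le {x : ℝ} (hx : 0 ≤ x) :
    gaussianTail x * exp (x ^ 2 / 2) ≤ 4 / 3 / (1 + x) :=
  calc gaussianTail x * exp (x ^ 2 / 2) = 4 / 3 * (3 / 4 * gaussianTail x) * exp (x ^ 2 / 2) := by
        ring
    _ ≤ 4 / 3 * (exp (-x ^ 2 / 2) / (1 + x)) * exp (x ^ 2 / 2) := by
        gcongr; exact three_div_four_mul_gaussianTail_le hx
    _ = 4 / 3 / (1 + x) := by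
        rw [mul_assoc, div_mul_eq_mul_div (exp _), exp_neg_sq_div_two_mul_exp_sq_div_two]; ring

theorem stmt_0 (x : ℝ) (hx : 0 ≤ x) :
    1 / (Real.sqrt (2 * Real.pi) * (1 + x)) ≤ (1 - stdNormalCDF x) * Real.exp (x ^ 2 / 2) ∧
    (1 - stdNormalCDF x) * Real.exp (x ^ 2 / 2) ≤ 1 / (Real.sqrt Real.pi * (1 + x)) := by
  rw [one_sub_stdNormalCDF, div_mul_eq_mul_div]
  constructor
  · rw [mul_comm, ← div_div, div_le_div_iff_of_pos_right (by positivity)]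
    exact one_div_one_add_le_gaussianTail_mul_exp hx
  · have h43 : (4 / 3 : ℝ) ≤ √2 := le_sqrt_of_sq_le (by norm_num)
    calc gaussianTail x * exp (x ^ 2 / 2) / √(2 * π) ≤ 4 / 3 / (1 + x) / √(2 * π) := by
          gcongr; exact gaussianTail_mul_exp_le hx
      _ ≤ √2 / (1 + x) / (√2 * √π) := by
          rw [sqrt_mul zero_le_two]; gcongr
      _ = 1 / (√π * (1 + x)) := by
          field_simp
end

section
/- Let (ξ_i, F_i)_{i=1,…,n} be a martingale difference sequence satisfying the conditional Bernstein condition with parameter ε ∈ (0, 1/2], and suppose |⟨S⟩_n − 1| ≤ δ² a.s. for some δ ∈ [0,1]. Then for all 0 ≤ λ < ε^{-1}, the drift B_n(λ) = ∑_{i=1}^n E_λ[ξ_i | F_{i-1}] (where E_λ denotes expectation under the conjugate measure dP_λ = Z_n(λ) dP with Z_n(λ) = ∏_{i=1}^n e^{λξ_i}/E[e^{λξ_i}|F_{i-1}]) satisfies B_n(λ) ≤ ((λ − 0.5λ²ε)/(1 − λε)²)(1 + δ²) almost surely. -/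
/-!
Expanding `ξ e^{λξ} = ∑ⱼ λʲ/j! ξ^{j+1}` and exchanging conditional expectation with the sum
(legitimate since `∑ⱼ |λ|ʲ/j! |ξ|^{j+1} = |ξ| e^{|λ||ξ|}` is integrable) gives
`E[ξ e^{λξ} | F] = ∑ⱼ λʲ/j! E[ξ^{j+1} | F]`. The `j = 0` term vanishes by the martingale
difference property and the conditional Bernstein condition bounds the rest by
`(λ/2) σ² ∑ᵢ (i+2)(λε)ⁱ ≤ (λ - λ²ε/2)/(1-λε)² σ²` with `σ² = E[ξ² | F]`. The denominator
`E[e^{λξ} | F]` is at least `1` because `e^{λξ} ≥ 1 + λξ`, so each summand of the drift is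
at most `(λ - λ²ε/2)/(1-λε)² E[ξ² | F]`, and summing uses `⟨S⟩ₙ ≤ 1 + δ²`.
-/

open MeasureTheory ProbabilityTheory Real Filter Finset
open scoped Nat

lemma one_sub_sq_mul_sum_range_two_add_mul_pow (x : ℝ) (N : ℕ) :
    (1 - x) ^ 2 * ∑ j ∈ range N, ((j : ℝ) + 2) * x ^ j
      = 2 - x - x ^ N * ((N + 2) - (N + 1) * x) := by
  induction N with
  | zero => simp
  | succ N ih =>
    rw [sum_range_succ, mul_add, ih]
    push_cast
    ring

lemma sum_range_two_add_mul_pow_le {x : ℝ} (hx0 : 0 ≤ x) (hx1 : x < 1) (N : ℕ) :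
    ∑ j ∈ range N, ((j : ℝ) + 2) * x ^ j ≤ (2 - x) / (1 - x) ^ 2 := by
  have hpos : 0 < (1 - x) ^ 2 := pow_pos (by linarith) 2
  rw [le_div_iff₀ hpos, mul_comm, one_sub_sq_mul_sum_range_two_add_mul_pow]
  have : 0 ≤ x ^ N * ((N + 2) - (N + 1) * x) :=
    mul_nonneg (by positivity) (by nlinarith [(N.cast_nonneg : (0 : ℝ) ≤ N)])
  linarith

lemma bernstein_drift_const_nonneg {lam ε : ℝ} (hlam : 0 ≤ lam) (hlamε : lam * ε < 1) :
    0 ≤ (lam - 0.5 * lam ^ 2 * ε) / (1 - lam * ε) ^ 2 :=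
  div_nonneg (by nlinarith) (sq_nonneg _)

lemma pow_succ_div_factorial_mul_bernstein_bound (lam ε s : ℝ) (i : ℕ) :
    lam ^ (i + 1) / (i + 1)! * (1 / 2 * (i + 2)! * ε ^ i * s)
      = lam / 2 * s * ((i + 2) * (lam * ε) ^ i) := by
  rw [Nat.factorial_succ (i + 1)]
  push_cast
  field_simp
  ring

lemma tsum_pow_div_factorial_mul_le_of_bernstein {lam ε s : ℝ} {M : ℕ → ℝ}
    (hlam : 0 ≤ lam) (hε : 0 ≤ ε) (hlamε : lam * ε < 1) (hs : 0 ≤ s) (hM1 : M 1 = 0)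
    (hM : ∀ k, 2 ≤ k → |M k| ≤ 1 / 2 * k ! * ε ^ (k - 2) * s) :
    ∑' j, lam ^ j / j ! * M (j + 1) ≤ (lam - 0.5 * lam ^ 2 * ε) / (1 - lam * ε) ^ 2 * s := by
  have hne : (1 - lam * ε) ^ 2 ≠ 0 := pow_ne_zero 2 (by linarith)
  have hrhs : (lam - 0.5 * lam ^ 2 * ε) / (1 - lam * ε) ^ 2 * s
      = lam / 2 * s * ((2 - lam * ε) / (1 - lam * ε) ^ 2) := by
    field_simp
    ring
  have hrhs_nonneg : 0 ≤ lam / 2 * s * ((2 - lam * ε) / (1 - lam * ε) ^ 2) :=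
    mul_nonneg (by positivity) (div_nonneg (by linarith) (sq_nonneg _))
  rw [hrhs]
  by_cases hsum : Summable fun j => lam ^ j / j ! * M (j + 1)
  swap
  -- the junk value `0` of a divergent series is below the nonnegative bound
  · rwa [tsum_eq_zero_of_not_summable hsum]
  refine hsum.tsum_le_of_sum_range_le fun N => ?_
  cases N with
  | zero => simpa using hrhs_nonneg
  | succ N =>
    rw [sum_range_succ', pow_zero, hM1, mul_zero, add_zero]
    calc ∑ i ∈ range N, lam ^ (i + 1) / (i + 1)! * M (i + 1 + 1)
        ≤ ∑ i ∈ range N, lam / 2 * s * ((i + 2) * (lam * ε) ^ i) := by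
          refine sum_le_sum fun i _ => ?_
          rw [← pow_succ_div_factorial_mul_bernstein_bound]
          have hMi := hM (i + 2) (by omega)
          rw [Nat.add_sub_cancel] at hMi
          exact mul_le_mul_of_nonneg_left ((le_abs_self _).trans hMi) (by positivity)
      _ = lam / 2 * s * ∑ i ∈ range N, ((i : ℝ) + 2) * (lam * ε) ^ i := (mul_sum ..).symm
      _ ≤ lam / 2 * s * ((2 - lam * ε) / (1 - lam * ε) ^ 2) := by
          gcongr
          exact sum_range_two_add_mul_pow_le (mul_nonneg hlam hε) hlamε N

lemma hasSum_pow_div_factorial_mul_pow_succ (c x : ℝ) :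
    HasSum (fun j : ℕ => c ^ j / j ! * x ^ (j + 1)) (x * exp (c * x)) := by
  have h := (NormedSpace.expSeries_div_hasSum_exp (c * x)).mul_left x
  rw [← Real.exp_eq_exp_ℝ] at h
  exact h.congr_fun fun j => by ring

section ConditionalMoments

variable {Ω : Type*} {m m₀ : MeasurableSpace Ω} {μ : Measure Ω} {X : Ω → ℝ}

lemma integrable_abs_mul_exp_mul_abs
    (hX : ∀ c, Integrable (fun ω => X ω * exp (c * X ω)) μ) (c : ℝ) :
    Integrable (fun ω => |X ω| * exp (c * |X ω|)) μ := by
  refine ((hX c).abs.add (hX (-c)).abs).mono' ?_ (Eventually.of_forall fun ω => ?_)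
  · have habs : AEStronglyMeasurable (fun ω => |X ω|) μ := by
      have h0 := (hX 0).aestronglyMeasurable
      simp only [zero_mul, exp_zero, mul_one] at h0
      exact continuous_abs.comp_aestronglyMeasurable h0
    exact habs.mul (continuous_exp.comp_aestronglyMeasurable (habs.const_mul c))
  · rw [norm_eq_abs, abs_of_nonneg (by positivity)]
    rcases abs_cases (X ω) with ⟨h, -⟩ | ⟨h, -⟩ <;> rw [h]
    · exact le_add_of_le_of_nonneg (le_abs_self _) (abs_nonneg _)
    · have : -X ω * exp (c * -X ω) = -(X ω * exp (-c * X ω)) := by rw [mul_neg, ← neg_mul]; ring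
      rw [this]
      exact le_add_of_nonneg_of_le (abs_nonneg _) (neg_le_abs _)

lemma condExp_mul_exp_ae_eq_tsum {c : ℝ} (hX : AEStronglyMeasurable X μ)
    (hB : Integrable (fun ω => |X ω| * exp (|c| * |X ω|)) μ) :
    μ[fun ω => X ω * exp (c * X ω) | m]
      =ᵐ[μ] fun ω => ∑' j, c ^ j / j ! * μ[fun ω => X ω ^ (j + 1) | m] ω := by
  have hterm : ∀ j : ℕ, AEStronglyMeasurable (fun ω => c ^ j / j ! * X ω ^ (j + 1)) μ :=
    fun j => (hX.pow (j + 1)).const_mul _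
  have hnorm : ∀ ω, ∑' j : ℕ, ‖c ^ j / j ! * X ω ^ (j + 1)‖ₑ
      = ENNReal.ofReal (|X ω| * exp (|c| * |X ω|)) := by
    intro ω
    have h := hasSum_pow_div_factorial_mul_pow_succ |c| |X ω|
    simp_rw [enorm_eq_ofReal_abs]
    rw [← ENNReal.ofReal_tsum_of_nonneg (fun j => abs_nonneg _) ?_, ← h.tsum_eq]
    · congr 1
      refine tsum_congr fun j => ?_
      rw [abs_mul, abs_div, abs_pow, abs_pow, Nat.abs_cast]
    · refine h.summable.congr fun j => ?_
      rw [abs_mul, abs_div, abs_pow, abs_pow, Nat.abs_cast]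
  have hfin : ∑' j : ℕ, ∫⁻ ω, ‖c ^ j / j ! * X ω ^ (j + 1)‖ₑ ∂μ ≠ ⊤ := by
    rw [← lintegral_tsum fun j => (hterm j).enorm]
    simp_rw [hnorm]
    exact hB.lintegral_lt_top.ne
  have hpt : (fun ω => X ω * exp (c * X ω)) = fun ω => ∑' j : ℕ, c ^ j / j ! * X ω ^ (j + 1) :=
    funext fun ω => (hasSum_pow_div_factorial_mul_pow_succ c (X ω)).tsum_eq.symm
  have hsmul : ∀ᵐ ω ∂μ, ∀ j : ℕ, μ[fun ω => c ^ j / j ! * X ω ^ (j + 1) | m] ω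
      = c ^ j / j ! * μ[fun ω => X ω ^ (j + 1) | m] ω :=
    ae_all_iff.2 fun j => condExp_smul (c ^ j / j ! : ℝ) (fun ω => X ω ^ (j + 1)) m
  rw [hpt]
  filter_upwards [condExp_tsum hterm hfin, hsmul] with ω h hj
  rw [h]
  exact tsum_congr hj

lemma one_le_condExp_exp [IsFiniteMeasure μ] (hm : m ≤ m₀) {c : ℝ} (hX : Integrable X μ)
    (hexp : Integrable (fun ω => exp (c * X ω)) μ) (hmd : μ[X | m] =ᵐ[μ] 0) :
    ∀ᵐ ω ∂μ, 1 ≤ μ[fun ω => exp (c * X ω) | m] ω := by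
  have hmono := condExp_mono (m := m) ((integrable_const (1 : ℝ)).add (hX.smul c)) hexp
    (Eventually.of_forall fun ω => by
      simp only [Pi.add_apply, Pi.smul_apply, smul_eq_mul]
      linarith [add_one_le_exp (c * X ω)])
  filter_upwards [hmono, condExp_add (m := m) (integrable_const (1 : ℝ)) (hX.smul c),
    condExp_smul (m := m) c X, hmd] with ω hω hadd hsmul hzero
  simpa [hadd, hsmul, hzero, condExp_const hm] using hω

lemma condExp_mul_exp_le_of_bernstein {lam ε : ℝ}
    (hX : ∀ c, Integrable (fun ω => X ω * exp (c * X ω)) μ) (hmd : μ[X | m] =ᵐ[μ] 0)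
    (hlam : 0 ≤ lam) (hε : 0 ≤ ε) (hlamε : lam * ε < 1)
    (hbern : ∀ k, 2 ≤ k → ∀ᵐ ω ∂μ,
      |μ[fun ω => X ω ^ k | m] ω| ≤ 1 / 2 * k ! * ε ^ (k - 2) * μ[fun ω => X ω ^ 2 | m] ω) :
    ∀ᵐ ω ∂μ, μ[fun ω => X ω * exp (lam * X ω) | m] ω
      ≤ (lam - 0.5 * lam ^ 2 * ε) / (1 - lam * ε) ^ 2 * μ[fun ω => X ω ^ 2 | m] ω := by
  have hXm : AEStronglyMeasurable X μ := by
    simpa using (hX 0).aestronglyMeasurable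
  have hB := integrable_abs_mul_exp_mul_abs hX |lam|
  have hmd' : μ[fun ω => X ω ^ 1 | m] =ᵐ[μ] 0 := by simpa using hmd
  filter_upwards [condExp_mul_exp_ae_eq_tsum (m := m) hXm hB, hmd',
    ae_all_iff.2 fun k => ae_all_iff.2 (hbern k),
    condExp_nonneg (m := m) (Eventually.of_forall fun ω => sq_nonneg (X ω))]
    with ω hseries hfirst hmoments hvar
  rw [hseries]
  exact tsum_pow_div_factorial_mul_le_of_bernstein hlam hε hlamε hvar hfirst hmoments

lemma condExp_mul_exp_div_condExp_exp_le_of_bernstein [IsFiniteMeasure μ] (hm : m ≤ m₀)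
    {lam ε : ℝ} (hexp : ∀ c, Integrable (fun ω => exp (c * X ω)) μ)
    (hX : ∀ c, Integrable (fun ω => X ω * exp (c * X ω)) μ) (hmd : μ[X | m] =ᵐ[μ] 0)
    (hlam : 0 ≤ lam) (hε : 0 ≤ ε) (hlamε : lam * ε < 1)
    (hbern : ∀ k, 2 ≤ k → ∀ᵐ ω ∂μ,
      |μ[fun ω => X ω ^ k | m] ω| ≤ 1 / 2 * k ! * ε ^ (k - 2) * μ[fun ω => X ω ^ 2 | m] ω) :
    ∀ᵐ ω ∂μ, μ[fun ω => X ω * exp (lam * X ω) | m] ω / μ[fun ω => exp (lam * X ω) | m] ω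
      ≤ (lam - 0.5 * lam ^ 2 * ε) / (1 - lam * ε) ^ 2 * μ[fun ω => X ω ^ 2 | m] ω := by
  have hX1 : Integrable X μ := by simpa using hX 0
  filter_upwards [condExp_mul_exp_le_of_bernstein hX hmd hlam hε hlamε hbern,
    one_le_condExp_exp hm hX1 (hexp lam) hmd,
    condExp_nonneg (m := m) (Eventually.of_forall fun ω => sq_nonneg (X ω))]
    with ω hnum hden hvar
  have hc := bernstein_drift_const_nonneg hlam hlamε
  exact div_le_of_le_mul₀ (by linarith) (mul_nonneg hc hvar)
    (hnum.trans (le_mul_of_one_le_right (mul_nonneg hc hvar) hden))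

end ConditionalMoments

theorem stmt_3_general {Ω : Type*} [MeasurableSpace Ω] (μ : Measure Ω) [IsProbabilityMeasure μ]
    (n : ℕ) (ℱ : ℕ → MeasurableSpace Ω) (hle : ∀ i, ℱ i ≤ ‹MeasurableSpace Ω›)
    (ξ : ℕ → Ω → ℝ)
    (hintexp : ∀ i (c : ℝ), Integrable (fun ω => Real.exp (c * ξ i ω)) μ)
    (hintmexp : ∀ i (c : ℝ), Integrable (fun ω => ξ i ω * Real.exp (c * ξ i ω)) μ)
    (hmd : ∀ i ∈ Finset.Icc 1 n, μ[ξ i | ℱ (i - 1)] =ᵐ[μ] 0)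
    (ε : ℝ) (hε : 0 < ε)
    (hbern : ∀ k, 2 ≤ k → ∀ i ∈ Finset.Icc 1 n,
      ∀ᵐ ω ∂μ, |(μ[(fun ω' => ξ i ω' ^ k) | ℱ (i - 1)]) ω|
        ≤ (1 / 2) * (Nat.factorial k) * ε ^ (k - 2) * (μ[(fun ω' => ξ i ω' ^ 2) | ℱ (i - 1)]) ω)
    (δ : ℝ)
    (hA2 : ∀ᵐ ω ∂μ,
      |(∑ i ∈ Finset.Icc 1 n, (μ[(fun ω' => ξ i ω' ^ 2) | ℱ (i - 1)]) ω) - 1| ≤ δ ^ 2)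
    (lam : ℝ) (hlam : 0 ≤ lam) (hlamε : lam < ε⁻¹) :
    ∀ᵐ ω ∂μ,
      ∑ i ∈ Finset.Icc 1 n,
        (μ[(fun ω' => ξ i ω' * Real.exp (lam * ξ i ω')) | ℱ (i - 1)]) ω /
          (μ[(fun ω' => Real.exp (lam * ξ i ω')) | ℱ (i - 1)]) ω
      ≤ ((lam - 0.5 * lam ^ 2 * ε) / (1 - lam * ε) ^ 2) * (1 + δ ^ 2) := by
  have hlamε' : lam * ε < 1 := by
    calc lam * ε < ε⁻¹ * ε := by gcongr
      _ = 1 := inv_mul_cancel₀ hε.ne'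
  set c := (lam - 0.5 * lam ^ 2 * ε) / (1 - lam * ε) ^ 2
  have hc : 0 ≤ c := bernstein_drift_const_nonneg hlam hlamε'
  have hterm := (eventually_all_finset (Icc 1 n)).2 fun i hi =>
    condExp_mul_exp_div_condExp_exp_le_of_bernstein (hle (i - 1)) (hintexp i) (hintmexp i)
      (hmd i hi) hlam hε.le hlamε' fun k hk => hbern k hk i hi
  filter_upwards [hterm, hA2] with ω hω hvar
  calc _ ≤ ∑ i ∈ Icc 1 n, c * μ[fun ω' => ξ i ω' ^ 2 | ℱ (i - 1)] ω := sum_le_sum hω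
    _ = c * ∑ i ∈ Icc 1 n, μ[fun ω' => ξ i ω' ^ 2 | ℱ (i - 1)] ω := (mul_sum ..).symm
    _ ≤ c * (1 + δ ^ 2) := by
      gcongr
      linarith [(abs_le.1 hvar).2]

theorem stmt_3 {Ω : Type*} [MeasurableSpace Ω] (μ : Measure Ω) [IsProbabilityMeasure μ]
    (n : ℕ) (ℱ : ℕ → MeasurableSpace Ω) (hmono : Monotone ℱ) (hle : ∀ i, ℱ i ≤ ‹MeasurableSpace Ω›)
    (ξ : ℕ → Ω → ℝ)
    (hadapt : ∀ i, StronglyMeasurable[ℱ i] (ξ i))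
    (hint : ∀ i k, Integrable (fun ω => ξ i ω ^ (k : ℕ)) μ)
    (hintexp : ∀ i (c : ℝ), Integrable (fun ω => Real.exp (c * ξ i ω)) μ)
    (hintmexp : ∀ i (c : ℝ), Integrable (fun ω => ξ i ω * Real.exp (c * ξ i ω)) μ)
    (hmd : ∀ i ∈ Finset.Icc 1 n, μ[ξ i | ℱ (i - 1)] =ᵐ[μ] 0)
    (ε : ℝ) (hε : 0 < ε) (hε2 : ε ≤ 1 / 2)
    (hbern : ∀ k, 2 ≤ k → ∀ i ∈ Finset.Icc 1 n,
      ∀ᵐ ω ∂μ, |(μ[(fun ω' => ξ i ω' ^ k) | ℱ (i - 1)]) ω|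
        ≤ (1 / 2) * (Nat.factorial k) * ε ^ (k - 2) * (μ[(fun ω' => ξ i ω' ^ 2) | ℱ (i - 1)]) ω)
    (δ : ℝ) (hδ0 : 0 ≤ δ) (hδ1 : δ ≤ 1)
    (hA2 : ∀ᵐ ω ∂μ,
      |(∑ i ∈ Finset.Icc 1 n, (μ[(fun ω' => ξ i ω' ^ 2) | ℱ (i - 1)]) ω) - 1| ≤ δ ^ 2)
    (lam : ℝ) (hlam : 0 ≤ lam) (hlamε : lam < ε⁻¹) :
    ∀ᵐ ω ∂μ,
      ∑ i ∈ Finset.Icc 1 n,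
        (μ[(fun ω' => ξ i ω' * Real.exp (lam * ξ i ω')) | ℱ (i - 1)]) ω /
          (μ[(fun ω' => Real.exp (lam * ξ i ω')) | ℱ (i - 1)]) ω
      ≤ ((lam - 0.5 * lam ^ 2 * ε) / (1 - lam * ε) ^ 2) * (1 + δ ^ 2) :=
  stmt_3_general μ n ℱ hle ξ hintexp hintmexp hmd ε hε hbern δ hA2 lam hlam hlamε
end

section
/- Under the conditional Bernstein condition with parameter ε ∈ (0,1/2] and the condition |⟨S⟩_n − 1| ≤ δ² a.s., for all 0 ≤ λ < ε^{-1} the cumulant process Ψ_n(λ) = ∑_{i=1}^n log E[e^{λξ_i} | F_{i-1}] satisfies Ψ_n(λ) ≤ λ²(1 + δ²)/(2(1 − λε)) almost surely. -/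
open MeasureTheory ProbabilityTheory Real

/-!
Expand `exp (λ ξ)` in its power series. Conditionally on `F_{i-1}` the constant term is `1`,
the linear term vanishes because `ξ` is a martingale difference, and by the Bernstein condition
the `k`-th term is at most `(λ²/2) (λε)^(k-2) E[ξ²|F_{i-1}]`; summing the geometric series gives
`E[exp (λ ξ)|F_{i-1}] ≤ 1 + λ² E[ξ²|F_{i-1}] / (2 (1 - λε))`, and `log x ≤ x - 1` turns this into
a bound on each term of `Ψ_n(λ)`. Summing over `i` and using `⟨S⟩_n ≤ 1 + δ²` concludes.
-/

open Filter Finset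
open scoped Nat

lemma Real.abs_sum_range_pow_div_factorial_le (x : ℝ) (N : ℕ) :
    |∑ k ∈ range N, x ^ k / k !| ≤ exp x + exp (-x) :=
  calc |∑ k ∈ range N, x ^ k / k !|
      ≤ ∑ k ∈ range N, |x| ^ k / k ! :=
        (abs_sum_le_sum_abs _ _).trans_eq <| sum_congr rfl fun k _ => by
          rw [abs_div, abs_pow, Nat.abs_cast]
    _ ≤ exp |x| := sum_le_exp_of_nonneg (abs_nonneg x) N
    _ ≤ exp x + exp (-x) := exp_abs_le x

lemma Real.tendsto_sum_range_pow_div_factorial (x : ℝ) :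
    Tendsto (fun N => ∑ k ∈ range N, x ^ k / k !) atTop (nhds (exp x)) := by
  simpa only [Real.exp_eq_exp_ℝ] using (NormedSpace.expSeries_div_hasSum_exp x).tendsto_sum_nat

lemma Real.log_le_of_le_one_add {x a : ℝ} (hx : 0 ≤ x) (ha : 0 ≤ a) (h : x ≤ 1 + a) :
    log x ≤ a := by
  rcases hx.eq_or_lt with rfl | hx
  · simpa using ha
  · linarith [log_le_sub_one_of_pos hx]

lemma sum_range_pow_div_factorial_mul_le_of_bernstein {lam ε : ℝ} {g : ℕ → ℝ}
    (hlam : 0 ≤ lam) (hε : 0 ≤ ε) (hlamε : lam * ε < 1) (hg0 : g 0 = 1) (hg1 : g 1 = 0)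
    (hbern : ∀ k, 2 ≤ k → |g k| ≤ 1 / 2 * k ! * ε ^ (k - 2) * g 2) (N : ℕ) :
    ∑ k ∈ range N, lam ^ k / k ! * g k ≤ 1 + lam ^ 2 / (2 * (1 - lam * ε)) * g 2 := by
  have hg2 : 0 ≤ g 2 := by
    simpa using (abs_nonneg _).trans (hbern 2 le_rfl)
  have hC : 0 ≤ lam ^ 2 / (2 * (1 - lam * ε)) * g 2 :=
    mul_nonneg (div_nonneg (sq_nonneg lam) (by linarith)) hg2
  have hterm (j : ℕ) : lam ^ (j + 2) / (j + 2)! * g (j + 2) ≤ lam ^ 2 * g 2 / 2 * (lam * ε) ^ j :=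
    calc lam ^ (j + 2) / (j + 2)! * g (j + 2)
        ≤ lam ^ (j + 2) / (j + 2)! * (1 / 2 * (j + 2)! * ε ^ j * g 2) :=
          mul_le_mul_of_nonneg_left
            ((le_abs_self _).trans (by simpa using hbern (j + 2) (by omega))) (by positivity)
      _ = lam ^ 2 * g 2 / 2 * (lam * ε) ^ j := by
          field_simp
          ring
  match N with
  | 0 => simp only [range_zero, sum_empty]; linarith
  | 1 => simpa [hg0] using hC
  | M + 2 =>
    have hgeom : ∑ j ∈ range M, (lam * ε) ^ j ≤ (1 - lam * ε)⁻¹ := by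
      simpa using geom_sum_Ico_le_of_lt_one (m := 0) (n := M) (by positivity) hlamε
    calc ∑ k ∈ range (M + 2), lam ^ k / k ! * g k
        = 1 + ∑ j ∈ range M, lam ^ (j + 2) / (j + 2)! * g (j + 2) := by
          rw [sum_range_succ', sum_range_succ', add_assoc, add_comm]
          simp [hg0, hg1]
      _ ≤ 1 + lam ^ 2 * g 2 / 2 * ∑ j ∈ range M, (lam * ε) ^ j := by
          rw [mul_sum]
          exact add_le_add_right (sum_le_sum fun j _ => hterm j) 1
      _ ≤ 1 + lam ^ 2 * g 2 / 2 * (1 - lam * ε)⁻¹ := by gcongr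
      _ = 1 + lam ^ 2 / (2 * (1 - lam * ε)) * g 2 := by field_simp

lemma exists_subseq_ae_tendsto_condExp_of_dominated {Ω E : Type*} [NormedAddCommGroup E]
    [NormedSpace ℝ E] [CompleteSpace E] {m m₀ : MeasurableSpace Ω} (hm : m ≤ m₀)
    {μ : Measure Ω} [IsFiniteMeasure μ] {fs : ℕ → Ω → E} {f : Ω → E} (bound : Ω → ℝ)
    (hfs_meas : ∀ n, AEStronglyMeasurable (fs n) μ) (h_int : Integrable bound μ)
    (hb : ∀ n, ∀ᵐ x ∂μ, ‖fs n x‖ ≤ bound x)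
    (hfs : ∀ᵐ x ∂μ, Tendsto (fun n => fs n x) atTop (nhds (f x))) :
    ∃ ns : ℕ → ℕ, StrictMono ns ∧
      ∀ᵐ x ∂μ, Tendsto (fun n => (μ[fs (ns n)|m]) x) atTop (nhds ((μ[f|m]) x)) := by
  have hL1 := tendsto_condExpL1_of_dominated_convergence hm bound hfs_meas h_int hb hfs
  obtain ⟨ns, hns, hae⟩ := (tendstoInMeasure_of_tendsto_Lp hL1).exists_seq_tendsto_ae
  refine ⟨ns, hns, ?_⟩
  have hfs_eq : ∀ᵐ x ∂μ, ∀ n, (μ[fs (ns n)|m]) x = (condExpL1 hm μ (fs (ns n)) : Ω → E) x :=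
    ae_all_iff.2 fun n => condExp_ae_eq_condExpL1 hm (fs (ns n))
  filter_upwards [hae, hfs_eq, condExp_ae_eq_condExpL1 hm f] with x hx hfs_x hf_x
  simpa only [hfs_x, hf_x] using hx

section CondExp

variable {Ω : Type*} {m m₀ : MeasurableSpace Ω} {μ : Measure Ω} {ξ : Ω → ℝ}

lemma condExp_sum_range_pow_div_factorial (hint : ∀ k : ℕ, Integrable (fun ω => ξ ω ^ k) μ)
    (lam : ℝ) (N : ℕ) :
    μ[fun ω => ∑ k ∈ range N, (lam * ξ ω) ^ k / k ! | m]
      =ᵐ[μ] fun ω => ∑ k ∈ range N, lam ^ k / k ! * μ[fun ω' => ξ ω' ^ k | m] ω := by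
  have hsum : (fun ω => ∑ k ∈ range N, (lam * ξ ω) ^ k / k !)
      = ∑ k ∈ range N, (lam ^ k / k ! : ℝ) • fun ω => ξ ω ^ k := by
    ext ω
    simp only [Finset.sum_apply, Pi.smul_apply, smul_eq_mul, mul_pow, div_mul_eq_mul_div]
  have hterms : ∀ᵐ ω ∂μ, ∀ k ∈ range N,
      μ[(lam ^ k / k ! : ℝ) • fun ω' => ξ ω' ^ k | m] ω
        = lam ^ k / k ! * μ[fun ω' => ξ ω' ^ k | m] ω :=
    (eventually_all_finset _).2 fun k _ => condExp_smul _ _ m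
  rw [hsum]
  filter_upwards [condExp_finsetSum (fun k _ => (hint k).smul (lam ^ k / k ! : ℝ)) m, hterms]
    with ω hω hterms_ω
  rw [hω, Finset.sum_apply]
  exact sum_congr rfl hterms_ω

lemma condExp_exp_mul_le_of_bernstein (hm : m ≤ m₀) [IsFiniteMeasure μ]
    (hint : ∀ k : ℕ, Integrable (fun ω => ξ ω ^ k) μ) {lam ε : ℝ}
    (hexp : Integrable (fun ω => exp (lam * ξ ω)) μ)
    (hexp_neg : Integrable (fun ω => exp (-lam * ξ ω)) μ)
    (hmd : μ[ξ | m] =ᵐ[μ] 0)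
    (hbern : ∀ k, 2 ≤ k → ∀ᵐ ω ∂μ,
      |μ[fun ω' => ξ ω' ^ k | m] ω| ≤ 1 / 2 * k ! * ε ^ (k - 2) * μ[fun ω' => ξ ω' ^ 2 | m] ω)
    (hlam : 0 ≤ lam) (hε : 0 ≤ ε) (hlamε : lam * ε < 1) :
    ∀ᵐ ω ∂μ, μ[fun ω' => exp (lam * ξ ω') | m] ω
      ≤ 1 + lam ^ 2 / (2 * (1 - lam * ε)) * μ[fun ω' => ξ ω' ^ 2 | m] ω := by
  have hdom (N : ℕ) : ∀ᵐ ω ∂μ,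
      ‖∑ k ∈ range N, (lam * ξ ω) ^ k / (k ! : ℝ)‖ ≤ exp (lam * ξ ω) + exp (-lam * ξ ω) :=
    Eventually.of_forall fun ω => by
      simpa only [Real.norm_eq_abs, neg_mul] using
        Real.abs_sum_range_pow_div_factorial_le (lam * ξ ω) N
  have hterm_int (k : ℕ) : Integrable (fun ω => (lam * ξ ω) ^ k / (k ! : ℝ)) μ := by
    simpa only [mul_pow] using ((hint k).const_mul (lam ^ k)).div_const (k ! : ℝ)
  obtain ⟨ns, -, hlim⟩ := exists_subseq_ae_tendsto_condExp_of_dominated hm _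
    (fun N => (integrable_finsetSum (range N) fun k _ => hterm_int k).aestronglyMeasurable)
    (hexp.add hexp_neg) hdom
    (Eventually.of_forall fun ω => Real.tendsto_sum_range_pow_div_factorial (lam * ξ ω))
  have hpartial := ae_all_iff.2 fun N => condExp_sum_range_pow_div_factorial (m := m) hint lam N
  have hzero : μ[fun ω => ξ ω ^ 0 | m] = fun _ => 1 := by
    simp only [pow_zero]
    exact condExp_const hm 1
  have hone : μ[fun ω => ξ ω ^ 1 | m] =ᵐ[μ] 0 := by simpa only [pow_one] using hmd
  have hbern_all := ae_all_iff.2 fun k => eventually_imp_distrib_left.2 (hbern k)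
  filter_upwards [hlim, hpartial, hone, hbern_all] with ω hlim_ω hpartial_ω hone_ω hbern_ω
  refine le_of_tendsto hlim_ω (Eventually.of_forall fun N => ?_)
  rw [hpartial_ω]
  exact sum_range_pow_div_factorial_mul_le_of_bernstein hlam hε hlamε
    (congrFun hzero ω) hone_ω hbern_ω _

lemma condExp_log_exp_mul_le_of_bernstein (hm : m ≤ m₀) [IsFiniteMeasure μ]
    (hint : ∀ k : ℕ, Integrable (fun ω => ξ ω ^ k) μ) {lam ε : ℝ}
    (hexp : Integrable (fun ω => exp (lam * ξ ω)) μ)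
    (hexp_neg : Integrable (fun ω => exp (-lam * ξ ω)) μ)
    (hmd : μ[ξ | m] =ᵐ[μ] 0)
    (hbern : ∀ k, 2 ≤ k → ∀ᵐ ω ∂μ,
      |μ[fun ω' => ξ ω' ^ k | m] ω| ≤ 1 / 2 * k ! * ε ^ (k - 2) * μ[fun ω' => ξ ω' ^ 2 | m] ω)
    (hlam : 0 ≤ lam) (hε : 0 ≤ ε) (hlamε : lam * ε < 1) :
    ∀ᵐ ω ∂μ, log (μ[fun ω' => exp (lam * ξ ω') | m] ω)
      ≤ lam ^ 2 / (2 * (1 - lam * ε)) * μ[fun ω' => ξ ω' ^ 2 | m] ω := by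
  filter_upwards [condExp_exp_mul_le_of_bernstein hm hint hexp hexp_neg hmd hbern hlam hε hlamε,
    condExp_nonneg (m := m) (Eventually.of_forall fun ω => (exp_pos (lam * ξ ω)).le),
    condExp_nonneg (m := m) (Eventually.of_forall fun ω => sq_nonneg (ξ ω))]
    with ω hmgf hexp_nonneg hsq_nonneg
  exact Real.log_le_of_le_one_add hexp_nonneg
    (mul_nonneg (div_nonneg (sq_nonneg lam) (by linarith)) hsq_nonneg) hmgf

end CondExp

theorem stmt_4_general {Ω : Type*} [MeasurableSpace Ω] (μ : Measure Ω) [IsProbabilityMeasure μ]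
    (n : ℕ) (ℱ : ℕ → MeasurableSpace Ω) (hle : ∀ i, ℱ i ≤ ‹MeasurableSpace Ω›)
    (ξ : ℕ → Ω → ℝ)
    (hint : ∀ i k, Integrable (fun ω => ξ i ω ^ (k : ℕ)) μ)
    (hintexp : ∀ i (c : ℝ), Integrable (fun ω => Real.exp (c * ξ i ω)) μ)
    (hmd : ∀ i ∈ Finset.Icc 1 n, μ[ξ i | ℱ (i - 1)] =ᵐ[μ] 0)
    (ε : ℝ) (hε : 0 < ε)
    (hbern : ∀ k, 2 ≤ k → ∀ i ∈ Finset.Icc 1 n,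
      ∀ᵐ ω ∂μ, |(μ[(fun ω' => ξ i ω' ^ k) | ℱ (i - 1)]) ω|
        ≤ (1 / 2) * (Nat.factorial k) * ε ^ (k - 2) * (μ[(fun ω' => ξ i ω' ^ 2) | ℱ (i - 1)]) ω)
    (δ : ℝ)
    (hA2 : ∀ᵐ ω ∂μ,
      |(∑ i ∈ Finset.Icc 1 n, (μ[(fun ω' => ξ i ω' ^ 2) | ℱ (i - 1)]) ω) - 1| ≤ δ ^ 2)
    (lam : ℝ) (hlam : 0 ≤ lam) (hlamε : lam < ε⁻¹) :
    ∀ᵐ ω ∂μ,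
      ∑ i ∈ Finset.Icc 1 n,
        Real.log ((μ[(fun ω' => Real.exp (lam * ξ i ω')) | ℱ (i - 1)]) ω)
      ≤ lam ^ 2 * (1 + δ ^ 2) / (2 * (1 - lam * ε)) := by
  have hlamε' : lam * ε < 1 := (lt_div_iff₀ hε).1 (by rwa [one_div])
  have hC : 0 ≤ lam ^ 2 / (2 * (1 - lam * ε)) := div_nonneg (sq_nonneg lam) (by linarith)
  have hlog := (eventually_all_finset (Icc 1 n)).2 fun i hi =>
    condExp_log_exp_mul_le_of_bernstein (hle (i - 1)) (hint i) (hintexp i lam)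
      (hintexp i (-lam)) (hmd i hi) (fun k hk => hbern k hk i hi) hlam hε.le hlamε'
  filter_upwards [hA2, hlog] with ω hA2_ω hlog_ω
  calc ∑ i ∈ Icc 1 n, log (μ[fun ω' => exp (lam * ξ i ω') | ℱ (i - 1)] ω)
      ≤ ∑ i ∈ Icc 1 n, lam ^ 2 / (2 * (1 - lam * ε)) * μ[fun ω' => ξ i ω' ^ 2 | ℱ (i - 1)] ω :=
        sum_le_sum hlog_ω
    _ = lam ^ 2 / (2 * (1 - lam * ε)) * ∑ i ∈ Icc 1 n, μ[fun ω' => ξ i ω' ^ 2 | ℱ (i - 1)] ω :=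
        (mul_sum _ _ _).symm
    _ ≤ lam ^ 2 / (2 * (1 - lam * ε)) * (1 + δ ^ 2) :=
        mul_le_mul_of_nonneg_left (by linarith [(abs_le.1 hA2_ω).2]) hC
    _ = lam ^ 2 * (1 + δ ^ 2) / (2 * (1 - lam * ε)) := div_mul_eq_mul_div _ _ _

theorem stmt_4 {Ω : Type*} [MeasurableSpace Ω] (μ : Measure Ω) [IsProbabilityMeasure μ]
    (n : ℕ) (ℱ : ℕ → MeasurableSpace Ω) (hmono : Monotone ℱ) (hle : ∀ i, ℱ i ≤ ‹MeasurableSpace Ω›)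
    (ξ : ℕ → Ω → ℝ)
    (hadapt : ∀ i, StronglyMeasurable[ℱ i] (ξ i))
    (hint : ∀ i k, Integrable (fun ω => ξ i ω ^ (k : ℕ)) μ)
    (hintexp : ∀ i (c : ℝ), Integrable (fun ω => Real.exp (c * ξ i ω)) μ)
    (hmd : ∀ i ∈ Finset.Icc 1 n, μ[ξ i | ℱ (i - 1)] =ᵐ[μ] 0)
    (ε : ℝ) (hε : 0 < ε) (hε2 : ε ≤ 1 / 2)
    (hbern : ∀ k, 2 ≤ k → ∀ i ∈ Finset.Icc 1 n,
      ∀ᵐ ω ∂μ, |(μ[(fun ω' => ξ i ω' ^ k) | ℱ (i - 1)]) ω|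
        ≤ (1 / 2) * (Nat.factorial k) * ε ^ (k - 2) * (μ[(fun ω' => ξ i ω' ^ 2) | ℱ (i - 1)]) ω)
    (δ : ℝ) (hδ0 : 0 ≤ δ) (hδ1 : δ ≤ 1)
    (hA2 : ∀ᵐ ω ∂μ,
      |(∑ i ∈ Finset.Icc 1 n, (μ[(fun ω' => ξ i ω' ^ 2) | ℱ (i - 1)]) ω) - 1| ≤ δ ^ 2)
    (lam : ℝ) (hlam : 0 ≤ lam) (hlamε : lam < ε⁻¹) :
    ∀ᵐ ω ∂μ,
      ∑ i ∈ Finset.Icc 1 n,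
        Real.log ((μ[(fun ω' => Real.exp (lam * ξ i ω')) | ℱ (i - 1)]) ω)
      ≤ lam ^ 2 * (1 + δ ^ 2) / (2 * (1 - lam * ε)) :=
  stmt_4_general μ n ℱ hle ξ hint hintexp hmd ε hε hbern δ hA2 lam hlam hlamε
end

section
/- Let ε ∈ (0, 1/2], δ ∈ [0,1], and x ≥ 0. Define λ̄ = (2x/(1+δ²)) / (1 + 2xε/(1+δ²) + √(1 + 2xε/(1+δ²))). Then λ̄ ∈ [0, ε^{-1}) and λ̄ is the unique solution in [0, ε^{-1}) of the equation (λ − 0.5λ²ε)/(1 − λε)² = x/(1 + δ²). -/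
/-!
With `u = 1 - λε` one has `λ - λ²ε/2 = (1 - u²)/(2ε)`, so the equation
`(λ - λ²ε/2)/(1 - λε)² = c` says `u⁻² = 1 + 2cε`. On `λ < ε⁻¹` the root `u` is positive, hence
`u = 1/√(1 + 2cε)`, i.e. `λ = (1 - 1/√(1 + 2cε))/ε`; rationalizing with `√(1 + 2cε)² = 1 + 2cε`
gives the closed form `2c/(1 + 2cε + √(1 + 2cε))`. Here `c = x/(1 + δ²)`.
-/

noncomputable def lambdaBar (ε c : ℝ) : ℝ :=
  2 * c / (1 + 2 * c * ε + √(1 + 2 * c * ε))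

section

variable {ε c lam : ℝ}

theorem div_one_sub_mul_sq_eq_iff (hε : ε ≠ 0) (hu : 1 - lam * ε ≠ 0) :
    (lam - 0.5 * lam ^ 2 * ε) / (1 - lam * ε) ^ 2 = c ↔
      (1 - lam * ε) ^ 2 * (1 + 2 * c * ε) = 1 := by
  have key : (1 - lam * ε) ^ 2 * (1 + 2 * c * ε) - 1 =
      2 * ε * (c * (1 - lam * ε) ^ 2 - (lam - 0.5 * lam ^ 2 * ε)) := by ring
  rw [div_eq_iff (pow_ne_zero 2 hu), eq_comm, ← sub_eq_zero, ← sub_eq_zero (b := (1 : ℝ)), key,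
    mul_eq_zero, or_iff_right (mul_ne_zero two_ne_zero hε)]

theorem div_one_sub_mul_sq_eq_iff_one_sub_mul_eq_inv_sqrt (hε : 0 < ε) (hc : 0 ≤ c)
    (hlam : lam < ε⁻¹) :
    (lam - 0.5 * lam ^ 2 * ε) / (1 - lam * ε) ^ 2 = c ↔
      1 - lam * ε = (√(1 + 2 * c * ε))⁻¹ := by
  have hu : 0 < 1 - lam * ε := by
    rw [← one_div, lt_div_iff₀ hε] at hlam
    linarith
  have hs : √(1 + 2 * c * ε) ^ 2 = 1 + 2 * c * ε := Real.sq_sqrt (by positivity)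
  have hs0 : 0 < √(1 + 2 * c * ε) := by positivity
  set s := √(1 + 2 * c * ε)
  rw [div_one_sub_mul_sq_eq_iff hε.ne' hu.ne', ← hs, ← mul_pow,
    pow_eq_one_iff_of_nonneg (by positivity) two_ne_zero, mul_eq_one_iff_eq_inv₀ hs0.ne']

theorem lambdaBar_eq_one_sub_inv_sqrt_div (hε : 0 < ε) (hc : 0 ≤ c) :
    lambdaBar ε c = (1 - (√(1 + 2 * c * ε))⁻¹) / ε := by
  have hs : √(1 + 2 * c * ε) ^ 2 = 1 + 2 * c * ε := Real.sq_sqrt (by positivity)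
  rw [lambdaBar]
  field_simp
  linear_combination -hs

theorem lambdaBar_nonneg (hε : 0 < ε) (hc : 0 ≤ c) : 0 ≤ lambdaBar ε c := by
  unfold lambdaBar
  positivity

theorem lambdaBar_lt_inv (hε : 0 < ε) (hc : 0 ≤ c) : lambdaBar ε c < ε⁻¹ := by
  rw [lambdaBar, div_lt_iff₀ (by positivity), ← div_eq_inv_mul, lt_div_iff₀ hε]
  nlinarith [Real.sqrt_nonneg (1 + 2 * c * ε)]

theorem div_one_sub_mul_sq_eq_iff_eq_lambdaBar (hε : 0 < ε) (hc : 0 ≤ c) (hlam : lam < ε⁻¹) :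
    (lam - 0.5 * lam ^ 2 * ε) / (1 - lam * ε) ^ 2 = c ↔ lam = lambdaBar ε c := by
  rw [div_one_sub_mul_sq_eq_iff_one_sub_mul_eq_inv_sqrt hε hc hlam,
    lambdaBar_eq_one_sub_inv_sqrt_div hε hc, eq_div_iff hε.ne']
  constructor <;> intro h <;> linarith

end

theorem stmt_7_general (ε δ x : ℝ) (hε : 0 < ε)
    (hx : 0 ≤ x) :
    let lamBar := (2 * x / (1 + δ ^ 2)) /
      (1 + 2 * x * ε / (1 + δ ^ 2) + Real.sqrt (1 + 2 * x * ε / (1 + δ ^ 2)))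
    (0 ≤ lamBar ∧ lamBar < ε⁻¹) ∧
    (lamBar - 0.5 * lamBar ^ 2 * ε) / (1 - lamBar * ε) ^ 2 = x / (1 + δ ^ 2) ∧
    ∀ lam : ℝ, 0 ≤ lam → lam < ε⁻¹ →
      (lam - 0.5 * lam ^ 2 * ε) / (1 - lam * ε) ^ 2 = x / (1 + δ ^ 2) → lam = lamBar := by
  have hc : 0 ≤ x / (1 + δ ^ 2) := by positivity
  rw [show 2 * x * ε / (1 + δ ^ 2) = 2 * (x / (1 + δ ^ 2)) * ε by ring,
    show 2 * x / (1 + δ ^ 2) = 2 * (x / (1 + δ ^ 2)) by ring]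
  generalize x / (1 + δ ^ 2) = c at hc ⊢
  refine ⟨⟨lambdaBar_nonneg hε hc, lambdaBar_lt_inv hε hc⟩,
    (div_one_sub_mul_sq_eq_iff_eq_lambdaBar hε hc (lambdaBar_lt_inv hε hc)).mpr rfl,
    fun lam _ hlam h => (div_one_sub_mul_sq_eq_iff_eq_lambdaBar hε hc hlam).mp h⟩

theorem stmt_7 (ε δ x : ℝ) (hε : 0 < ε) (hε2 : ε ≤ 1 / 2) (hδ0 : 0 ≤ δ) (hδ1 : δ ≤ 1)
    (hx : 0 ≤ x) :
    let lamBar := (2 * x / (1 + δ ^ 2)) /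
      (1 + 2 * x * ε / (1 + δ ^ 2) + Real.sqrt (1 + 2 * x * ε / (1 + δ ^ 2)))
    (0 ≤ lamBar ∧ lamBar < ε⁻¹) ∧
    (lamBar - 0.5 * lamBar ^ 2 * ε) / (1 - lamBar * ε) ^ 2 = x / (1 + δ ^ 2) ∧
    ∀ lam : ℝ, 0 ≤ lam → lam < ε⁻¹ →
      (lam - 0.5 * lam ^ 2 * ε) / (1 - lam * ε) ^ 2 = x / (1 + δ ^ 2) → lam = lamBar :=
  stmt_7_general ε δ x hε hx
end

section
/- Let (ξ_i)_{i=1,…,n} be independent symmetric random variables, let [S]_n = ∑_{i=1}^n ξ_i², let F_0 = σ(ξ_j², 1 ≤ j ≤ n), F_i = σ(ξ_k, 1 ≤ k ≤ i; ξ_j², 1 ≤ j ≤ n), and set η_i = ξ_i/√([S]_n) (with 0/0 = 0). Then (η_i, F_i) is a sequence of martingale differences, each η_i is conditionally symmetric given F_{i-1}, and ∑_{i=1}^n E[η_i² | F_{i-1}] = ∑_{i=1}^n η_i² = 1 a.s. (on the event [S]_n > 0). -/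
/-!
Flipping the sign of `ξ i` preserves the joint law of `ξ i` and `(ξ j)_{j ≠ i}` (independence and
symmetry), and it fixes every event of `ℱ (i - 1)`, since such an event only depends on `ξ i ^ 2`
and the other coordinates. Hence `η i` and `-η i` have the same conditional law given
`ℱ (i - 1)`, which gives both the conditional symmetry and `E[η i | ℱ (i - 1)] = 0`. Finally
`η i ^ 2 = ξ i ^ 2 / [S]_n` is `ℱ (i - 1)`-measurable, so it is its own conditional expectation.
-/

open MeasureTheory ProbabilityTheory Real Finset

section Flip

variable {Ω β : Type*} {m : MeasurableSpace Ω} [m₀ : MeasurableSpace Ω] {μ : Measure Ω}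

theorem setIntegral_comp_preimage_eq_of_map_eq {E F : Type*} [MeasurableSpace E]
    [NormedAddCommGroup F] [NormedSpace ℝ F] {f g : Ω → E} (hf : AEMeasurable f μ)
    (hg : AEMeasurable g μ) (hfg : μ.map f = μ.map g) {G : E → F} (hG : StronglyMeasurable G)
    {B : Set E} (hB : MeasurableSet B) :
    ∫ ω in f ⁻¹' B, G (f ω) ∂μ = ∫ ω in g ⁻¹' B, G (g ω) ∂μ := by
  rw [← setIntegral_map hB hG.aestronglyMeasurable hf, hfg,
    setIntegral_map hB hG.aestronglyMeasurable hg]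

theorem condExp_ae_eq_condExp_of_forall_setIntegral_eq (hm : m ≤ m₀)
    [SigmaFinite (μ.trim hm)] {f g : Ω → ℝ} (hf : Integrable f μ) (hg : Integrable g μ)
    (hfg : ∀ s, MeasurableSet[m] s → ∫ ω in s, f ω ∂μ = ∫ ω in s, g ω ∂μ) :
    μ[f | m] =ᵐ[μ] μ[g | m] :=
  ae_eq_condExp_of_forall_setIntegral_eq hm hg (fun _ _ _ => integrable_condExp.integrableOn)
    (fun s hs _ => by rw [setIntegral_condExp hm hf hs, hfg s hs])
    stronglyMeasurable_condExp.aestronglyMeasurable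

variable [MeasurableSpace β] [IsFiniteMeasure μ] {X : Ω → ℝ} {Y : Ω → β}

theorem ProbabilityTheory.IndepFun.map_prodMk_neg_eq (hX : Measurable X) (hY : Measurable Y)
    (hXY : IndepFun X Y μ) (hsymm : μ.map X = μ.map (fun ω => -X ω)) :
    μ.map (fun ω => (-X ω, Y ω)) = μ.map (fun ω => (X ω, Y ω)) := by
  have hnegXY : IndepFun (fun ω => -X ω) Y μ := hXY.comp measurable_neg measurable_id
  calc μ.map (fun ω => (-X ω, Y ω))
      = (μ.map fun ω => -X ω).prod (μ.map Y) :=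
        hnegXY.map_prod_eq_prod_map_map hX.neg.aemeasurable hY.aemeasurable
    _ = μ.map (fun ω => (X ω, Y ω)) := by
        rw [← hsymm, hXY.map_prod_eq_prod_map_map hX.aemeasurable hY.aemeasurable]

theorem condExp_comp_prodMk_ae_eq_neg (hm : m ≤ m₀)
    (hmXY : m ≤ MeasurableSpace.comap (fun ω => (X ω ^ 2, Y ω)) inferInstance)
    (hX : Measurable X) (hY : Measurable Y) (hXY : IndepFun X Y μ)
    (hsymm : μ.map X = μ.map (fun ω => -X ω)) {G : ℝ × β → ℝ} (hG : Measurable G)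
    (hint : Integrable (fun ω => G (X ω, Y ω)) μ)
    (hint_neg : Integrable (fun ω => G (-X ω, Y ω)) μ) :
    μ[fun ω => G (X ω, Y ω) | m] =ᵐ[μ] μ[fun ω => G (-X ω, Y ω) | m] := by
  refine condExp_ae_eq_condExp_of_forall_setIntegral_eq hm hint hint_neg fun s hs => ?_
  obtain ⟨B, hB, rfl⟩ := hmXY s hs
  set B' := (fun p : ℝ × β => (p.1 ^ 2, p.2)) ⁻¹' B
  have hB' : MeasurableSet B' := (measurable_fst.pow_const 2).prodMk measurable_snd hB
  have hpre_neg : (fun ω => (X ω ^ 2, Y ω)) ⁻¹' B = (fun ω => (-X ω, Y ω)) ⁻¹' B' := by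
    ext ω; simp only [B', Set.mem_preimage, neg_sq]
  calc ∫ ω in (fun ω => (X ω, Y ω)) ⁻¹' B', G (X ω, Y ω) ∂μ
      = ∫ ω in (fun ω => (-X ω, Y ω)) ⁻¹' B', G (-X ω, Y ω) ∂μ :=
        setIntegral_comp_preimage_eq_of_map_eq (hX.prodMk hY).aemeasurable
          (hX.neg.prodMk hY).aemeasurable (hXY.map_prodMk_neg_eq hX hY hsymm).symm
          hG.stronglyMeasurable hB'
    _ = _ := by rw [hpre_neg]

end Flip

section SelfNormalized

variable {Ω : Type*} (ξ : ℕ → Ω → ℝ) (n : ℕ)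

abbrev sqFiltration (i : ℕ) : MeasurableSpace Ω :=
  (⨆ k ∈ Icc 1 i, MeasurableSpace.comap (ξ k) (inferInstance : MeasurableSpace ℝ)) ⊔
  (⨆ j ∈ Icc 1 n,
    MeasurableSpace.comap (fun ω => (ξ j ω) ^ 2) (inferInstance : MeasurableSpace ℝ))

noncomputable def selfNormalized (i : ℕ) (ω : Ω) : ℝ :=
  ξ i ω / √(∑ j ∈ Icc 1 n, ξ j ω ^ 2)

variable {ξ n}

theorem sqFiltration_le [MeasurableSpace Ω] (hmeas : ∀ i, Measurable (ξ i)) (i : ℕ) :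
    sqFiltration ξ n i ≤ ‹MeasurableSpace Ω› :=
  sup_le (iSup₂_le fun k _ => (hmeas k).comap_le)
    (iSup₂_le fun j _ => ((hmeas j).pow_const 2).comap_le)

theorem measurable_sq_sqFiltration {j : ℕ} (hj : j ∈ Icc 1 n) (i : ℕ) :
    Measurable[sqFiltration ξ n i] (fun ω => ξ j ω ^ 2) :=
  measurable_iff_comap_le.mpr <| le_sup_of_le_right <|
    le_iSup₂ (f := fun j (_ : j ∈ Icc 1 n) =>
      MeasurableSpace.comap (fun ω => ξ j ω ^ 2) (inferInstance : MeasurableSpace ℝ)) j hj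

theorem sqFiltration_pred_le_comap {i : ℕ} (hi : i ∈ Icc 1 n) :
    sqFiltration ξ n (i - 1) ≤ MeasurableSpace.comap
      (fun ω => (ξ i ω ^ 2, fun j : (Icc 1 n).erase i => ξ j ω)) inferInstance := by
  set Z := fun ω => (ξ i ω ^ 2, fun j : (Icc 1 n).erase i => ξ j ω)
  have hZ := comap_measurable (m := inferInstance) Z
  have hcoord : ∀ j (hj : j ∈ (Icc 1 n).erase i),
      Measurable[MeasurableSpace.comap Z inferInstance] (ξ j) := fun j hj =>
    (measurable_pi_apply (⟨j, hj⟩ : (Icc 1 n).erase i)).comp (measurable_snd.comp hZ)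
  refine sup_le (iSup₂_le fun k hk => (hcoord k ?_).comap_le) (iSup₂_le fun j hj => ?_)
  · simp only [mem_erase, mem_Icc] at hk hi ⊢
    omega
  · by_cases hji : j = i
    · subst hji
      exact (measurable_fst.comp hZ).comap_le
    · exact ((hcoord j (mem_erase.mpr ⟨hji, hj⟩)).pow_const 2).comap_le

theorem selfNormalized_eq {i : ℕ} (hi : i ∈ Icc 1 n) (ω : Ω) :
    selfNormalized ξ n i ω
      = ξ i ω / √(ξ i ω ^ 2 + ∑ j : (Icc 1 n).erase i, ξ j ω ^ 2) := by
  rw [selfNormalized, sum_coe_sort _ (fun j => ξ j ω ^ 2),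
    add_sum_erase _ (fun j => ξ j ω ^ 2) hi]

theorem abs_selfNormalized_le_one {i : ℕ} (hi : i ∈ Icc 1 n) (ω : Ω) :
    |selfNormalized ξ n i ω| ≤ 1 := by
  rw [selfNormalized, abs_div, abs_of_nonneg (sqrt_nonneg _), ← sqrt_sq_eq_abs]
  exact div_le_one_of_le₀
    (sqrt_le_sqrt (single_le_sum (fun j _ => sq_nonneg (ξ j ω)) hi)) (sqrt_nonneg _)

theorem measurable_selfNormalized [MeasurableSpace Ω] (hmeas : ∀ i, Measurable (ξ i))
    (i : ℕ) :
    Measurable (selfNormalized ξ n i) :=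
  (hmeas i).div (Finset.measurable_sum _ fun j _ => (hmeas j).pow_const 2).sqrt

theorem integrable_comp_selfNormalized [MeasurableSpace Ω] {μ : Measure Ω} [IsFiniteMeasure μ]
    (hmeas : ∀ i, Measurable (ξ i)) {i : ℕ} (hi : i ∈ Icc 1 n) {φ : ℝ → ℝ} (hφ : Measurable φ)
    {C : ℝ} (hφC : ∀ x ∈ Set.Icc (-1) 1, ‖φ x‖ ≤ C) :
    Integrable (fun ω => φ (selfNormalized ξ n i ω)) μ :=
  Integrable.of_bound (hφ.comp (measurable_selfNormalized hmeas i)).aestronglyMeasurable C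
    (ae_of_all _ fun ω => hφC _ (abs_le.mp (abs_selfNormalized_le_one hi ω)))

theorem sq_selfNormalized (i : ℕ) (ω : Ω) :
    selfNormalized ξ n i ω ^ 2 = ξ i ω ^ 2 / ∑ j ∈ Icc 1 n, ξ j ω ^ 2 := by
  rw [selfNormalized, div_pow, sq_sqrt (sum_nonneg fun j _ => sq_nonneg _)]

theorem sum_sq_selfNormalized {ω : Ω} (hω : ∑ j ∈ Icc 1 n, ξ j ω ^ 2 ≠ 0) :
    ∑ i ∈ Icc 1 n, selfNormalized ξ n i ω ^ 2 = 1 := by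
  simp_rw [sq_selfNormalized]
  rw [← sum_div, div_self hω]

theorem measurable_sq_selfNormalized [MeasurableSpace Ω] {i : ℕ} (hi : i ∈ Icc 1 n) (k : ℕ) :
    Measurable[sqFiltration ξ n k] (fun ω => selfNormalized ξ n i ω ^ 2) := by
  simp_rw [sq_selfNormalized]
  exact (measurable_sq_sqFiltration hi k).div
    (Finset.measurable_sum _ fun j hj => measurable_sq_sqFiltration hj k)

theorem condExp_comp_selfNormalized_ae_eq_neg [MeasurableSpace Ω] {μ : Measure Ω}
    [IsProbabilityMeasure μ] (hmeas : ∀ i, Measurable (ξ i)) (hindep : iIndepFun ξ μ) {i : ℕ}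
    (hi : i ∈ Icc 1 n) (hsymm : μ.map (ξ i) = μ.map (fun ω => -ξ i ω)) {φ : ℝ → ℝ}
    (hφ : Measurable φ)
    (hint : Integrable (fun ω => φ (selfNormalized ξ n i ω)) μ)
    (hint_neg : Integrable (fun ω => φ (-selfNormalized ξ n i ω)) μ) :
    μ[fun ω => φ (selfNormalized ξ n i ω) | sqFiltration ξ n (i - 1)]
      =ᵐ[μ] μ[fun ω => φ (-selfNormalized ξ n i ω) | sqFiltration ξ n (i - 1)] := by
  set Y : Ω → (Icc 1 n).erase i → ℝ := fun ω j => ξ j ω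
  set G : ℝ × ((Icc 1 n).erase i → ℝ) → ℝ := fun p =>
    φ (p.1 / √(p.1 ^ 2 + ∑ j, p.2 j ^ 2))
  have hG : Measurable G := hφ.comp <| measurable_fst.div <| ((measurable_fst.pow_const 2).add
    (Finset.measurable_sum _ fun j _ =>
      ((measurable_pi_apply j).comp measurable_snd).pow_const 2)).sqrt
  have hY : Measurable Y := measurable_pi_lambda _ fun j => hmeas j
  have hXY : IndepFun (ξ i) Y μ :=
    (hindep.indepFun_finset {i} ((Icc 1 n).erase i) (by simp) hmeas).comp
      (measurable_pi_apply (⟨i, mem_singleton_self i⟩ : ({i} : Finset ℕ))) measurable_id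
  have hpos : (fun ω => φ (selfNormalized ξ n i ω)) = fun ω => G (ξ i ω, Y ω) := by
    simp only [G, Y, selfNormalized_eq hi]
  have hneg : (fun ω => φ (-selfNormalized ξ n i ω)) = fun ω => G (-ξ i ω, Y ω) := by
    simp only [G, Y, selfNormalized_eq hi, neg_sq, neg_div]
  rw [hpos] at hint ⊢
  rw [hneg] at hint_neg ⊢
  exact condExp_comp_prodMk_ae_eq_neg (sqFiltration_le hmeas _) (sqFiltration_pred_le_comap hi)
    (hmeas i) hY hXY hsymm hG hint hint_neg

end SelfNormalized

theorem stmt_12_general {Ω : Type*} [MeasurableSpace Ω] (μ : Measure Ω) [IsProbabilityMeasure μ]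
    (n : ℕ) (ξ : ℕ → Ω → ℝ)
    (hmeas : ∀ i, Measurable (ξ i))
    (hindep : iIndepFun ξ μ)
    (hsymm : ∀ i ∈ Finset.Icc 1 n, Measure.map (ξ i) μ = Measure.map (fun ω => -ξ i ω) μ)
    (η : ℕ → Ω → ℝ)
    (hη : ∀ i ω, η i ω = ξ i ω / Real.sqrt (∑ j ∈ Finset.Icc 1 n, (ξ j ω) ^ 2))
    (ℱ : ℕ → MeasurableSpace Ω)
    (hℱ : ∀ i, ℱ i =
      (⨆ k ∈ Finset.Icc 1 i, MeasurableSpace.comap (ξ k) (inferInstance : MeasurableSpace ℝ)) ⊔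
      (⨆ j ∈ Finset.Icc 1 n,
        MeasurableSpace.comap (fun ω => (ξ j ω) ^ 2) (inferInstance : MeasurableSpace ℝ))) :
    (∀ i ∈ Finset.Icc 1 n, μ[η i | ℱ (i - 1)] =ᵐ[μ] 0) ∧
    (∀ i ∈ Finset.Icc 1 n, ∀ y : ℝ,
      μ[Set.indicator {ω' | η i ω' > y} (fun _ => (1 : ℝ)) | ℱ (i - 1)]
        =ᵐ[μ] μ[Set.indicator {ω' | -η i ω' > y} (fun _ => (1 : ℝ)) | ℱ (i - 1)]) ∧
    (∀ᵐ ω ∂μ, 0 < ∑ j ∈ Finset.Icc 1 n, (ξ j ω) ^ 2 →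
      (∑ i ∈ Finset.Icc 1 n, (μ[(fun ω' => (η i ω') ^ 2) | ℱ (i - 1)]) ω
          = ∑ i ∈ Finset.Icc 1 n, (η i ω) ^ 2 ∧
        ∑ i ∈ Finset.Icc 1 n, (η i ω) ^ 2 = 1)) := by
  obtain rfl : η = selfNormalized ξ n := funext fun i => funext (hη i)
  obtain rfl : ℱ = sqFiltration ξ n := funext hℱ
  have hbound : ∀ x ∈ Set.Icc (-1 : ℝ) 1, ‖x‖ ≤ 1 := fun x hx => abs_le.mpr hx
  refine ⟨fun i hi => ?_, fun i hi y => ?_,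
    ae_of_all _ fun ω hω => ⟨sum_congr rfl fun i hi => ?_, sum_sq_selfNormalized hω.ne'⟩⟩
  · have hflip : μ[selfNormalized ξ n i | sqFiltration ξ n (i - 1)]
        =ᵐ[μ] μ[-selfNormalized ξ n i | sqFiltration ξ n (i - 1)] :=
      condExp_comp_selfNormalized_ae_eq_neg hmeas hindep hi (hsymm i hi)
      measurable_id (integrable_comp_selfNormalized hmeas hi measurable_id hbound)
      (integrable_comp_selfNormalized hmeas hi measurable_neg fun x hx =>
        (norm_neg x).trans_le (hbound x hx))
    filter_upwards [hflip, condExp_neg (μ := μ) (selfNormalized ξ n i) _] with ω h₁ h₂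
    rw [Pi.neg_apply] at h₂
    rw [Pi.zero_apply]
    linarith
  · have hφ : Measurable ((Set.Ioi y).indicator (fun _ => (1 : ℝ))) :=
      measurable_const.indicator measurableSet_Ioi
    exact condExp_comp_selfNormalized_ae_eq_neg hmeas hindep hi (hsymm i hi) hφ
      (integrable_comp_selfNormalized hmeas hi hφ (C := 1) fun x _ =>
        (norm_indicator_le_norm_self _ _).trans_eq norm_one)
      (integrable_comp_selfNormalized hmeas hi (hφ.comp measurable_neg) (C := 1) fun x _ =>
        (norm_indicator_le_norm_self _ _).trans_eq norm_one)
  · rw [condExp_of_stronglyMeasurable (sqFiltration_le hmeas _)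
      (measurable_sq_selfNormalized hi _).stronglyMeasurable
      (integrable_comp_selfNormalized hmeas hi (measurable_id.pow_const 2) fun x hx => by
        rw [norm_pow]; exact pow_le_one₀ (norm_nonneg x) (hbound x hx))]

theorem stmt_12 {Ω : Type*} [MeasurableSpace Ω] (μ : Measure Ω) [IsProbabilityMeasure μ]
    (n : ℕ) (ξ : ℕ → Ω → ℝ)
    (hmeas : ∀ i, Measurable (ξ i))
    (hindep : iIndepFun ξ μ)
    (hsymm : ∀ i ∈ Finset.Icc 1 n, Measure.map (ξ i) μ = Measure.map (fun ω => -ξ i ω) μ)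
    (hnd : ∀ i ∈ Finset.Icc 1 n, μ {ω | ξ i ω = 0} < 1)
    (η : ℕ → Ω → ℝ)
    (hη : ∀ i ω, η i ω = ξ i ω / Real.sqrt (∑ j ∈ Finset.Icc 1 n, (ξ j ω) ^ 2))
    (ℱ : ℕ → MeasurableSpace Ω)
    (hℱ : ∀ i, ℱ i =
      (⨆ k ∈ Finset.Icc 1 i, MeasurableSpace.comap (ξ k) (inferInstance : MeasurableSpace ℝ)) ⊔
      (⨆ j ∈ Finset.Icc 1 n,
        MeasurableSpace.comap (fun ω => (ξ j ω) ^ 2) (inferInstance : MeasurableSpace ℝ))) :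
    (∀ i ∈ Finset.Icc 1 n, μ[η i | ℱ (i - 1)] =ᵐ[μ] 0) ∧
    (∀ i ∈ Finset.Icc 1 n, ∀ y : ℝ,
      μ[Set.indicator {ω' | η i ω' > y} (fun _ => (1 : ℝ)) | ℱ (i - 1)]
        =ᵐ[μ] μ[Set.indicator {ω' | -η i ω' > y} (fun _ => (1 : ℝ)) | ℱ (i - 1)]) ∧
    (∀ᵐ ω ∂μ, 0 < ∑ j ∈ Finset.Icc 1 n, (ξ j ω) ^ 2 →
      (∑ i ∈ Finset.Icc 1 n, (μ[(fun ω' => (η i ω') ^ 2) | ℱ (i - 1)]) ω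
          = ∑ i ∈ Finset.Icc 1 n, (η i ω) ^ 2 ∧
        ∑ i ∈ Finset.Icc 1 n, (η i ω) ^ 2 = 1)) :=
  stmt_12_general μ n ξ hmeas hindep hsymm η hη ℱ hℱ
end
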